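/- arXiv:1709.05519 — 5 statements merged into one kernel-verified Lean document; each statement's English description precedes it below -/
import Mathlib

section
/- Let C be a real symmetric positive definite n×n matrix, K ∈ ℝⁿ, and m ∈ ℝ with m − Kᵀ C⁻¹ K > 0. Let Cⁿᵉʷ be the (n+1)×(n+1) symmetric block matrix with upper-left block C, upper-right block K, lower-left block Kᵀ and lower-right entry m, and for B ∈ ℝⁿ and b ∈ ℝ let Bⁿᵉʷ := (B, b) ∈ ℝⁿ⁺¹. Then Cⁿᵉʷ is invertible and (Bⁿᵉʷ)ᵀ (Cⁿᵉʷ)⁻¹ Bⁿᵉʷ − Bᵀ C⁻¹ B = (b − Kᵀ C⁻¹ B)² / (m − Kᵀ C⁻¹ K). -/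
open Matrix

/-!
Invert `Cⁿᵉʷ` blockwise around `C`: with the scalar Schur complement `s = m − KᵀC⁻¹K`,
`(Cⁿᵉʷ)⁻¹ = [[C⁻¹ + C⁻¹K s⁻¹ KᵀC⁻¹, −C⁻¹K s⁻¹], [−s⁻¹KᵀC⁻¹, s⁻¹]]`.
Expanding the quadratic form of this matrix at `(B, b)` gives
`BᵀC⁻¹B + (b − BᵀC⁻¹K) s⁻¹ (b − KᵀC⁻¹B)`, and symmetry of `C⁻¹` makes the two outer
factors equal.
-/

namespace Matrix

section Block

variable {l m α : Type*} [Fintype l] [Fintype m] [DecidableEq l] [DecidableEq m] [CommRing α]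
  {A : Matrix l l α} {B : Matrix l m α} {C : Matrix m l α} {D : Matrix m m α}

theorem isUnit_fromBlocks_of_isUnit₁₁ (hA : IsUnit A) (hS : IsUnit (D - C * A⁻¹ * B)) :
    IsUnit (fromBlocks A B C D) := by
  let := hA.invertible
  rwa [isUnit_fromBlocks_iff_of_invertible₁₁, invOf_eq_nonsing_inv]

theorem inv_fromBlocks_of_isUnit₁₁ (hA : IsUnit A) (hS : IsUnit (D - C * A⁻¹ * B)) :
    (fromBlocks A B C D)⁻¹ =
      fromBlocks (A⁻¹ + A⁻¹ * B * (D - C * A⁻¹ * B)⁻¹ * C * A⁻¹)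
        (-(A⁻¹ * B * (D - C * A⁻¹ * B)⁻¹)) (-((D - C * A⁻¹ * B)⁻¹ * C * A⁻¹))
        (D - C * A⁻¹ * B)⁻¹ := by
  let := hA.invertible
  rw [← invOf_eq_nonsing_inv A] at hS ⊢
  let := hS.invertible
  let := fromBlocks₁₁Invertible A B C D
  simp only [← invOf_eq_nonsing_inv, invOf_fromBlocks₁₁_eq]

theorem sumElim_dotProduct_inv_fromBlocks_mulVec_sumElim (hA : IsUnit A)
    (hS : IsUnit (D - C * A⁻¹ * B)) (x : l → α) (y : m → α) :
    Sum.elim x y ⬝ᵥ ((fromBlocks A B C D)⁻¹ *ᵥ Sum.elim x y) =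
      x ⬝ᵥ (A⁻¹ *ᵥ x) +
        (y - x ᵥ* (A⁻¹ * B)) ⬝ᵥ ((D - C * A⁻¹ * B)⁻¹ *ᵥ (y - (C * A⁻¹) *ᵥ x)) := by
  rw [inv_fromBlocks_of_isUnit₁₁ hA hS, fromBlocks_mulVec, sumElim_dotProduct_sumElim]
  simp only [Sum.elim_comp_inl, Sum.elim_comp_inr, add_mulVec, neg_mulVec, ← mulVec_mulVec,
    mulVec_sub, sub_dotProduct, dotProduct_sub, dotProduct_add, dotProduct_neg,
    ← dotProduct_mulVec]
  ring

end Block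

section Bordered

variable {ι l α : Type*} [Fintype l]

theorem const_sub_replicateRow_mul_mul_replicateCol [CommRing α] (A : Matrix l l α)
    (L K : l → α) (d : α) :
    (of fun _ _ => d : Matrix ι ι α) - replicateRow ι L * A * replicateCol ι K =
      of fun _ _ => d - L ⬝ᵥ (A *ᵥ K) := by
  rw [Matrix.mul_assoc, ← replicateCol_mulVec, replicateRow_mul_replicateCol]
  rfl

variable [Unique ι] [DecidableEq ι] [Field α]

theorem isUnit_const_sub_replicateRow_mul_mul_replicateCol {A : Matrix l l α} {L K : l → α}
    {d : α} (hs : d - L ⬝ᵥ (A *ᵥ K) ≠ 0) :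
    IsUnit ((of fun _ _ => d : Matrix ι ι α) - replicateRow ι L * A * replicateCol ι K) := by
  rw [const_sub_replicateRow_mul_mul_replicateCol, isUnit_iff_isUnit_det, det_unique]
  exact hs.isUnit

theorem dotProduct_inv_const_mulVec (s : α) (u w : ι → α) :
    u ⬝ᵥ ((of fun _ _ => s : Matrix ι ι α)⁻¹ *ᵥ w) = u default * w default / s := by
  simp only [dotProduct, Finset.univ_unique, Finset.sum_singleton, inv_subsingleton, of_apply,
    Ring.inverse_eq_inv', mulVec_diagonal]
  ring

variable [DecidableEq l]

theorem sumElim_dotProduct_inv_fromBlocks_replicate_mulVec_sumElim_sub {A : Matrix l l α}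
    (hA : IsUnit A) {L K : l → α} {d : α} (hs : d - L ⬝ᵥ (A⁻¹ *ᵥ K) ≠ 0) (x : l → α) (c : α) :
    Sum.elim x (fun _ : ι => c) ⬝ᵥ
        ((fromBlocks A (replicateCol ι K) (replicateRow ι L) (of fun _ _ => d))⁻¹ *ᵥ
          Sum.elim x fun _ => c) - x ⬝ᵥ (A⁻¹ *ᵥ x) =
      (c - x ⬝ᵥ (A⁻¹ *ᵥ K)) * (c - L ⬝ᵥ (A⁻¹ *ᵥ x)) / (d - L ⬝ᵥ (A⁻¹ *ᵥ K)) := by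
  rw [sumElim_dotProduct_inv_fromBlocks_mulVec_sumElim hA
      (isUnit_const_sub_replicateRow_mul_mul_replicateCol hs),
    const_sub_replicateRow_mul_mul_replicateCol, dotProduct_inv_const_mulVec, add_sub_cancel_left,
    ← replicateCol_mulVec, mulVec_replicateCol_eq_const, ← mulVec_mulVec,
    replicateRow_mulVec_eq_const]
  rfl

end Bordered

end Matrix

/-- For a real symmetric positive definite `C`, `K ∈ ℝⁿ`, `m ∈ ℝ`
with positive Schur complement `m − KᵀC⁻¹K > 0`, the block matrix
`Cⁿᵉʷ = [[C, K], [Kᵀ, m]]` is invertible and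
`(Bⁿᵉʷ)ᵀ(Cⁿᵉʷ)⁻¹Bⁿᵉʷ − BᵀC⁻¹B = (b − KᵀC⁻¹B)² / (m − KᵀC⁻¹K)`,
where `Bⁿᵉʷ = (B, b)`. -/
theorem stmt_8 {n : ℕ} (C : Matrix (Fin n) (Fin n) ℝ)
    (hsymm : C.IsSymm) (hpd : C.PosDef)
    (K : Fin n → ℝ) (m : ℝ) (hschur : 0 < m - K ⬝ᵥ (C⁻¹ *ᵥ K))
    (B : Fin n → ℝ) (b : ℝ)
    (Cnew : Matrix (Fin n ⊕ Fin 1) (Fin n ⊕ Fin 1) ℝ)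
    (hCnew : Cnew = Matrix.fromBlocks C (fun i _ => K i) (fun _ j => K j) (fun _ _ => m))
    (Bnew : Fin n ⊕ Fin 1 → ℝ)
    (hBnew : Bnew = Sum.elim B (fun _ => b)) :
    IsUnit Cnew ∧
    Bnew ⬝ᵥ (Cnew⁻¹ *ᵥ Bnew) - B ⬝ᵥ (C⁻¹ *ᵥ B)
      = (b - K ⬝ᵥ (C⁻¹ *ᵥ B)) ^ 2 / (m - K ⬝ᵥ (C⁻¹ *ᵥ K)) := by
  have hCnew' : Cnew =
      fromBlocks C (replicateCol (Fin 1) K) (replicateRow (Fin 1) K) (of fun _ _ => m) := hCnew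
  have hC : IsUnit C := hpd.isUnit
  have hB : B ⬝ᵥ (C⁻¹ *ᵥ K) = K ⬝ᵥ (C⁻¹ *ᵥ B) := by
    rw [dotProduct_mulVec, ← mulVec_transpose, hsymm.inv.eq, dotProduct_comm]
  refine ⟨hCnew' ▸ isUnit_fromBlocks_of_isUnit₁₁ hC
    (isUnit_const_sub_replicateRow_mul_mul_replicateCol hschur.ne'), ?_⟩
  rw [hCnew', hBnew]
  refine (sumElim_dotProduct_inv_fromBlocks_replicate_mulVec_sumElim_sub hC hschur.ne' B b).trans ?_
  rw [hB, sq]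
end

section
/- Let E be a real inner product space, L⁰ ∈ E, and let L₁, …, Lₙ₊₁ ∈ E be linearly independent. Define the Gram data A := ⟨L⁰, L⁰⟩, Bᵢ := ⟨Lᵢ, L⁰⟩ and Cᵢⱼ := ⟨Lᵢ, Lⱼ⟩ for i, j = 1, …, n, and Kᵢ := ⟨Lᵢ, Lₙ₊₁⟩ for i = 1, …, n. Let εₙ² be the infimum of ‖L⁰ − ∑ᵢ₌₁ⁿ vᵢ Lᵢ‖² over v ∈ ℝⁿ, and εₙ₊₁² the infimum of ‖L⁰ − ∑ᵢ₌₁ⁿ⁺¹ vᵢ Lᵢ‖² over v ∈ ℝⁿ⁺¹. Then εₙ² − εₙ₊₁² = (⟨Lₙ₊₁, L⁰⟩ − Kᵀ C⁻¹ B)² / (⟨Lₙ₊₁, Lₙ₊₁⟩ − Kᵀ C⁻¹ K), and if εₙ² > 0 the relative hedge contribution (εₙ² − εₙ₊₁²)/εₙ² lies in the interval [0, 1]. -/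
/-!
Both infima are squared distances `‖L⁰ - P L⁰‖²` to spans. Adjoining `Lₙ₊₁` to
`S = span {L₁, …, Lₙ}` is the same as adjoining its residual `m = Lₙ₊₁ - P_S Lₙ₊₁`, which is
orthogonal to `S`; so the projection onto the larger span is `P_S + P_m`, and the squared error
drops by exactly `⟪m, L⁰⟫² / ‖m‖²`. On the matrix side `C⁻¹ B` are the coordinates of `P_S L⁰`,
so the Schur complements `⟪Lₙ₊₁, L⁰⟫ - Kᵀ C⁻¹ B` and `⟪Lₙ₊₁, Lₙ₊₁⟫ - Kᵀ C⁻¹ K` are `⟪m, L⁰⟫`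
and `‖m‖²`.
-/

open scoped RealInnerProductSpace
open Matrix

namespace Submodule

section RCLike

variable {𝕜 E : Type*} [RCLike 𝕜] [NormedAddCommGroup E] [InnerProductSpace 𝕜 E]

theorem iInf_norm_sub_sum_smul_sq {ι : Type*} [Fintype ι] (x : E) (f : ι → E)
    [(span 𝕜 (Set.range f)).HasOrthogonalProjection] :
    ⨅ v : ι → 𝕜, ‖x - ∑ i, v i • f i‖ ^ 2
      = ‖x - (span 𝕜 (Set.range f)).starProjection x‖ ^ 2 := by
  refine IsLeast.isGLB ⟨?_, ?_⟩ |>.ciInf_eq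
  · obtain ⟨v, hv⟩ := (mem_span_range_iff_exists_fun 𝕜).1
      ((span 𝕜 (Set.range f)).starProjection_apply_mem x)
    exact ⟨v, by simp only [hv]⟩
  · rintro _ ⟨v, rfl⟩
    have hv : ∑ i, v i • f i ∈ span 𝕜 (Set.range f) :=
      (mem_span_range_iff_exists_fun 𝕜).2 ⟨v, rfl⟩
    dsimp only
    gcongr
    rw [starProjection_minimal]
    exact ciInf_le ⟨0, by rintro _ ⟨w, rfl⟩; positivity⟩ (⟨_, hv⟩ : span 𝕜 (Set.range f))

theorem starProjection_sup_apply {U V : Submodule 𝕜 E} (h : U ⟂ V) [U.HasOrthogonalProjection]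
    [V.HasOrthogonalProjection] [(U ⊔ V).HasOrthogonalProjection] (x : E) :
    (U ⊔ V).starProjection x = U.starProjection x + V.starProjection x := by
  refine eq_starProjection_of_mem_orthogonal
    (add_mem (mem_sup_left (U.starProjection_apply_mem x))
      (mem_sup_right (V.starProjection_apply_mem x))) ?_
  rw [← inf_orthogonal, ← sub_sub]
  refine ⟨sub_mem (sub_starProjection_mem_orthogonal x)
    (h.symm.le (V.starProjection_apply_mem x)), ?_⟩
  rw [sub_right_comm]
  exact sub_mem (sub_starProjection_mem_orthogonal x) (h.le (U.starProjection_apply_mem x))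

theorem sup_span_singleton_eq_sup_span_starProjection_orthogonal (K : Submodule 𝕜 E)
    [K.HasOrthogonalProjection] (y : E) :
    K ⊔ 𝕜 ∙ y = K ⊔ 𝕜 ∙ Kᗮ.starProjection y := by
  have hy : y = K.starProjection y + Kᗮ.starProjection y := by
    rw [starProjection_orthogonal_val, add_sub_cancel]
  refine le_antisymm (sup_le le_sup_left ?_) (sup_le le_sup_left ?_) <;>
    rw [span_singleton_le_iff_mem]
  · convert add_mem (mem_sup_left (K.starProjection_apply_mem y))
      (mem_sup_right (mem_span_singleton_self _)) using 1
  · rw [starProjection_orthogonal_val]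
    exact sub_mem (mem_sup_right (mem_span_singleton_self y))
      (mem_sup_left (K.starProjection_apply_mem y))

end RCLike

section Real

variable {E : Type*} [NormedAddCommGroup E] [InnerProductSpace ℝ E]

theorem norm_sub_starProjection_sup_span_singleton_sq (K : Submodule ℝ E)
    [K.HasOrthogonalProjection] (y : E) [(K ⊔ ℝ ∙ y).HasOrthogonalProjection] (x : E) :
    ‖x - (K ⊔ ℝ ∙ y).starProjection x‖ ^ 2
      = ‖x - K.starProjection x‖ ^ 2
        - ⟪Kᗮ.starProjection y, x⟫ ^ 2 / ‖Kᗮ.starProjection y‖ ^ 2 := by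
  set m := Kᗮ.starProjection y
  have hsup := K.sup_span_singleton_eq_sup_span_starProjection_orthogonal y
  have : (K ⊔ ℝ ∙ m).HasOrthogonalProjection := hsup ▸ inferInstance
  have hm : m ∈ Kᗮ := Kᗮ.starProjection_apply_mem y
  have hortho : K ⟂ ℝ ∙ m := (isOrtho_iff_le.2 <| (span_singleton_le_iff_mem _ _).2 hm).symm
  have hproj : (K ⊔ ℝ ∙ y).starProjection x = K.starProjection x + (⟪m, x⟫ / ‖m‖ ^ 2) • m := by
    simp only [hsup]
    rw [starProjection_sup_apply hortho, starProjection_singleton]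
    rfl
  have hxm : ⟪x - K.starProjection x, m⟫ = ⟪m, x⟫ := by
    rw [real_inner_comm, inner_sub_right,
      inner_left_of_mem_orthogonal (K.starProjection_apply_mem x) hm, sub_zero]
  rw [hproj, ← sub_sub, norm_sub_sq_real, real_inner_smul_right, hxm, norm_smul, mul_pow,
    Real.norm_eq_abs, sq_abs]
  -- `m = 0` (that is, `y ∈ K`) is allowed: both sides then agree because `0 / 0 = 0`.
  rcases eq_or_ne m 0 with h0 | h0
  · simp [h0]
  · field_simp
    ring

variable {ι : Type*} [Fintype ι] [DecidableEq ι]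

theorem dotProduct_inv_gram_mulVec {g : ι → E} (hg : LinearIndependent ℝ g)
    [(span ℝ (Set.range g)).HasOrthogonalProjection] (x y : E) :
    (fun i ↦ ⟪g i, y⟫) ⬝ᵥ ((gram ℝ g)⁻¹ *ᵥ fun i ↦ ⟪g i, x⟫)
      = ⟪y, (span ℝ (Set.range g)).starProjection x⟫ := by
  obtain ⟨p, hp⟩ := (mem_span_range_iff_exists_fun ℝ).1
    ((span ℝ (Set.range g)).starProjection_apply_mem x)
  have hgram : gram ℝ g *ᵥ p = fun i ↦ ⟪g i, x⟫ := by
    ext i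
    have hgi : g i ∈ span ℝ (Set.range g) := subset_span (Set.mem_range_self i)
    rw [← starProjection_eq_self_iff.2 hgi, inner_starProjection_left_eq_right, ← hp]
    simp [mulVec, dotProduct, gram, inner_sum, real_inner_smul_right, mul_comm]
  have hdet : IsUnit (gram ℝ g).det :=
    (isUnit_iff_isUnit_det _).1 (posDef_gram_of_linearIndependent hg).isUnit
  rw [← hgram, mulVec_mulVec, nonsing_inv_mul _ hdet, one_mulVec, ← hp, inner_sum]
  simp [dotProduct, real_inner_smul_right, real_inner_comm, mul_comm]

theorem inner_sub_dotProduct_inv_gram_mulVec {g : ι → E} (hg : LinearIndependent ℝ g)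
    [(span ℝ (Set.range g)).HasOrthogonalProjection] (x y : E) :
    ⟪y, x⟫ - (fun i ↦ ⟪g i, y⟫) ⬝ᵥ ((gram ℝ g)⁻¹ *ᵥ fun i ↦ ⟪g i, x⟫)
      = ⟪(span ℝ (Set.range g))ᗮ.starProjection y, x⟫ := by
  rw [dotProduct_inv_gram_mulVec hg, starProjection_orthogonal_val, inner_sub_left,
    inner_starProjection_left_eq_right]

theorem real_inner_starProjection_self_eq_norm_sq (K : Submodule ℝ E)
    [K.HasOrthogonalProjection] (y : E) :
    ⟪K.starProjection y, y⟫ = ‖K.starProjection y‖ ^ 2 := by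
  simpa using K.re_inner_starProjection_eq_normSq y

end Real

end Submodule

/-- For `L⁰ ∈ E` and linearly independent `L₁, …, Lₙ₊₁ ∈ E`, with
Gram data `Bᵢ = ⟪Lᵢ, L⁰⟫`, `Cᵢⱼ = ⟪Lᵢ, Lⱼ⟫` (`i,j ≤ n`) and
`Kᵢ = ⟪Lᵢ, Lₙ₊₁⟫`, setting `εₙ² = inf_{v ∈ ℝⁿ} ‖L⁰ − ∑ᵢ₌₁ⁿ vᵢ Lᵢ‖²` and
`εₙ₊₁² = inf_{v ∈ ℝⁿ⁺¹} ‖L⁰ − ∑ᵢ₌₁ⁿ⁺¹ vᵢ Lᵢ‖²`, one has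
`εₙ² − εₙ₊₁² = (⟪Lₙ₊₁, L⁰⟫ − KᵀC⁻¹B)² / (⟪Lₙ₊₁, Lₙ₊₁⟫ − KᵀC⁻¹K)`, and
if `εₙ² > 0` the relative hedge contribution `(εₙ² − εₙ₊₁²)/εₙ²` lies in `[0,1]`. -/
theorem stmt_9 {E : Type*} [NormedAddCommGroup E] [InnerProductSpace ℝ E] {n : ℕ}
    (L0 : E) (L : Fin (n + 1) → E) (hL : LinearIndependent ℝ L)
    (B : Fin n → ℝ) (hB : ∀ i : Fin n, B i = ⟪L i.castSucc, L0⟫)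
    (C : Matrix (Fin n) (Fin n) ℝ)
    (hC : ∀ i j : Fin n, C i j = ⟪L i.castSucc, L j.castSucc⟫)
    (K : Fin n → ℝ) (hK : ∀ i : Fin n, K i = ⟪L i.castSucc, L (Fin.last n)⟫)
    (epsSqN epsSqNplus1 : ℝ)
    (hN : epsSqN = ⨅ v : Fin n → ℝ, ‖L0 - ∑ i : Fin n, v i • L i.castSucc‖ ^ 2)
    (hNplus1 : epsSqNplus1 = ⨅ v : Fin (n + 1) → ℝ, ‖L0 - ∑ i, v i • L i‖ ^ 2) :
    epsSqN - epsSqNplus1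
      = (⟪L (Fin.last n), L0⟫ - K ⬝ᵥ (C⁻¹ *ᵥ B)) ^ 2
        / (⟪L (Fin.last n), L (Fin.last n)⟫ - K ⬝ᵥ (C⁻¹ *ᵥ K)) ∧
    (0 < epsSqN → (epsSqN - epsSqNplus1) / epsSqN ∈ Set.Icc (0 : ℝ) 1) := by
  set g : Fin n → E := fun i ↦ L i.castSucc
  set y := L (Fin.last n)
  set S := Submodule.span ℝ (Set.range g)
  have : FiniteDimensional ℝ S := FiniteDimensional.span_of_finite ℝ (Set.finite_range g)
  set m := Sᗮ.starProjection y
  have hspan : Submodule.span ℝ (Set.range L) = S ⊔ ℝ ∙ y := by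
    rw [← Fin.snoc_init_self L, Fin.range_snoc, Submodule.span_insert, sup_comm]
    rfl
  have hεN : epsSqN = ‖L0 - S.starProjection L0‖ ^ 2 :=
    hN.trans (Submodule.iInf_norm_sub_sum_smul_sq L0 g)
  have hεN1 : epsSqNplus1 = ‖L0 - (S ⊔ ℝ ∙ y).starProjection L0‖ ^ 2 := by
    have : (Submodule.span ℝ (Set.range L)).HasOrthogonalProjection := hspan ▸ inferInstance
    rw [hNplus1, Submodule.iInf_norm_sub_sum_smul_sq]
    simp only [hspan]
  have hdiff : epsSqN - epsSqNplus1 = ⟪m, L0⟫ ^ 2 / ‖m‖ ^ 2 := by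
    rw [hεN, hεN1, S.norm_sub_starProjection_sup_span_singleton_sq]
    ring
  obtain rfl : C = gram ℝ g := Matrix.ext hC
  obtain rfl : B = fun i ↦ ⟪g i, L0⟫ := funext hB
  obtain rfl : K = fun i ↦ ⟪g i, y⟫ := funext hK
  have hg : LinearIndependent ℝ g := hL.comp _ (Fin.castSucc_injective n)
  refine ⟨?_, fun hpos ↦ ⟨?_, ?_⟩⟩
  · rw [Submodule.inner_sub_dotProduct_inv_gram_mulVec hg,
      Submodule.inner_sub_dotProduct_inv_gram_mulVec hg,
      Submodule.real_inner_starProjection_self_eq_norm_sq, hdiff]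
  · exact div_nonneg (hdiff ▸ by positivity) hpos.le
  · rw [div_le_one hpos, sub_le_self_iff, hεN1]
    positivity
end

section
/- Let K > 0 be real and u ∈ ℂ with Re u > 1. Then the function x ↦ exp(−u·x)·(eˣ − K)⁺ is integrable on ℝ and ∫_ℝ exp(−u·x)·(eˣ − K)⁺ dx = K^{1−u} / (u(u − 1)), where K^{1−u} := exp((1 − u)·log K) with the real logarithm. -/
/-!
Above `log K` the payoff is `eˣ - K`, so the integrand is `exp((1 - u)x) - K exp(-ux)` on
`(log K, ∞)` and zero elsewhere. Both exponentials decay at `+∞` since `Re u > 1`, and writing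
`K = exp (log K)` their integrals over `(log K, ∞)` combine to `K^{1-u} (1/(u - 1) - 1/u)`.
-/

open MeasureTheory Set

lemma cexp_neg_mul_mul_max_exp_sub_eq_indicator {K : ℝ} (hK : 0 < K) (u : ℂ) :
    (fun x : ℝ => Complex.exp (-u * x) * (max (Real.exp x - K) 0 : ℝ)) =
      (Ioi (Real.log K)).indicator
        (fun x : ℝ => Complex.exp ((1 - u) * x) - K * Complex.exp (-u * x)) := by
  funext x
  by_cases hx : x ∈ Ioi (Real.log K)
  · have hxK : K ≤ Real.exp x := ((Real.log_lt_iff_lt_exp hK).mp hx).le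
    rw [indicator_of_mem hx, max_eq_left (sub_nonneg.mpr hxK),
      show (1 - u) * (x : ℂ) = x + -u * x by ring, Complex.exp_add]
    push_cast
    ring
  · have hxK : Real.exp x ≤ K := (Real.exp_le_exp.mpr (not_lt.mp hx)).trans_eq (Real.exp_log hK)
    rw [indicator_of_notMem hx, max_eq_right (sub_nonpos.mpr hxK), Complex.ofReal_zero, mul_zero]

/-- Two-sided Laplace transform of the call payoff. For `K > 0`
and `u ∈ ℂ` with `Re u > 1`, the function `x ↦ exp(−ux)(eˣ − K)⁺` is
integrable on `ℝ` and
`∫ exp(−ux)(eˣ − K)⁺ dx = K^{1−u}/(u(u−1))`, with `K^{1−u} = exp((1−u) log K)`. -/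
theorem stmt_16 (K : ℝ) (hK : 0 < K) (u : ℂ) (hu : 1 < u.re) :
    Integrable (fun x : ℝ =>
      Complex.exp (-u * (x : ℂ)) * (max (Real.exp x - K) 0 : ℝ)) volume ∧
    ∫ x : ℝ, Complex.exp (-u * (x : ℂ)) * (max (Real.exp x - K) 0 : ℝ)
      = Complex.exp ((1 - u) * (Real.log K : ℂ)) / (u * (u - 1)) := by
  have hre₁ : (1 - u).re < 0 := by simp; linarith
  have hre₂ : (-u).re < 0 := by simp; linarith
  have hint₁ := integrableOn_exp_mul_complex_Ioi hre₁ (Real.log K)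
  have hint₂ := (integrableOn_exp_mul_complex_Ioi hre₂ (Real.log K)).const_mul (K : ℂ)
  rw [cexp_neg_mul_mul_max_exp_sub_eq_indicator hK u, integrable_indicator_iff measurableSet_Ioi,
    integral_indicator measurableSet_Ioi]
  refine ⟨hint₁.sub hint₂, ?_⟩
  rw [integral_sub hint₁ hint₂, integral_const_mul, integral_exp_mul_complex_Ioi hre₁,
    integral_exp_mul_complex_Ioi hre₂]
  have hKL : (K : ℂ) * Complex.exp (-u * Real.log K) = Complex.exp ((1 - u) * Real.log K) := by
    nth_rw 1 [← Real.exp_log hK]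
    rw [Complex.ofReal_exp, ← Complex.exp_add]
    ring_nf
  have hu₀ : u ≠ 0 := by rintro rfl; simp at hu; linarith
  have hu₁ : u - 1 ≠ 0 := by rw [sub_ne_zero]; rintro rfl; simp at hu
  have hu₁' : 1 - u ≠ 0 := by rw [← neg_sub, neg_ne_zero]; exact hu₁
  rw [mul_div_assoc', mul_neg, hKL]
  field_simp
  ring
end

section
/- Let K > 0 be real and u ∈ ℂ with Re u < 0. Then the function x ↦ exp(−u·x)·(K − eˣ)⁺ is integrable on ℝ and ∫_ℝ exp(−u·x)·(K − eˣ)⁺ dx = K^{1−u} / (u(u − 1)), where K^{1−u} := exp((1 − u)·log K) with the real logarithm. -/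
/-!
The payoff vanishes for `x > log K`, and below `log K` the integrand is
`K e^{-ux} - e^{(1-u)x}`. Both exponentials are integrable on `(-∞, log K]` because
`Re(-u) > 0` and `Re(1-u) > 0`, and their integrals `K^{1-u}/(-u)` and `K^{1-u}/(1-u)`
combine to `K^{1-u}/(u(u-1))`.
-/

open MeasureTheory Set

lemma max_sub_exp_eq_indicator {K : ℝ} (hK : 0 < K) (x : ℝ) :
    max (K - Real.exp x) 0 = (Iic (Real.log K)).indicator (fun x => K - Real.exp x) x := by
  by_cases hx : x ≤ Real.log K
  · have hexp : Real.exp x ≤ K := (Real.le_log_iff_exp_le hK).1 hx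
    rw [indicator_of_mem (mem_Iic.2 hx), max_eq_left (sub_nonneg.2 hexp)]
  · have hexp : K < Real.exp x := (Real.log_lt_iff_lt_exp hK).1 (not_le.1 hx)
    rw [indicator_of_notMem (notMem_Iic.2 (not_le.1 hx)), max_eq_right (by linarith)]

lemma cexp_mul_put_payoff_eq_indicator {K : ℝ} (hK : 0 < K) (u : ℂ) :
    (fun x : ℝ => Complex.exp (-u * x) * (max (K - Real.exp x) 0 : ℝ)) =
      (Iic (Real.log K)).indicator
        (fun x : ℝ => K * Complex.exp (-u * x) - Complex.exp ((1 - u) * x)) := by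
  ext x
  have hsplit : Complex.exp ((1 - u) * x) = Complex.exp (-u * x) * Complex.exp x := by
    rw [← Complex.exp_add]; ring_nf
  rw [max_sub_exp_eq_indicator hK, indicator_apply, indicator_apply]
  split_ifs
  · push_cast
    rw [hsplit]
    ring
  · simp

/-- Two-sided Laplace transform of the put payoff. For `K > 0`
and `u ∈ ℂ` with `Re u < 0`, the function `x ↦ exp(−ux)(K − eˣ)⁺` is
integrable on `ℝ` and
`∫ exp(−ux)(K − eˣ)⁺ dx = K^{1−u}/(u(u−1))`, with `K^{1−u} = exp((1−u) log K)`. -/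
theorem stmt_17 (K : ℝ) (hK : 0 < K) (u : ℂ) (hu : u.re < 0) :
    Integrable (fun x : ℝ =>
      Complex.exp (-u * (x : ℂ)) * (max (K - Real.exp x) 0 : ℝ)) volume ∧
    ∫ x : ℝ, Complex.exp (-u * (x : ℂ)) * (max (K - Real.exp x) 0 : ℝ)
      = Complex.exp ((1 - u) * (Real.log K : ℂ)) / (u * (u - 1)) := by
  have hre₁ : 0 < (-u).re := by simpa using hu
  have hre₂ : 0 < (1 - u).re := by simp only [Complex.sub_re, Complex.one_re]; linarith
  have hint₁ := integrableOn_exp_mul_complex_Iic hre₁ (Real.log K)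
  have hint₂ := integrableOn_exp_mul_complex_Iic hre₂ (Real.log K)
  rw [cexp_mul_put_payoff_eq_indicator hK, integrable_indicator_iff measurableSet_Iic,
    integral_indicator measurableSet_Iic]
  refine ⟨(hint₁.const_mul _).sub hint₂, ?_⟩
  rw [integral_sub (hint₁.const_mul _) hint₂, integral_const_mul,
    integral_exp_mul_complex_Iic hre₁, integral_exp_mul_complex_Iic hre₂]
  have hK_exp : (K : ℂ) * Complex.exp (-u * Real.log K) = Complex.exp ((1 - u) * Real.log K) := by
    have hK_eq : (K : ℂ) = Complex.exp (Real.log K) := by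
      rw [← Complex.ofReal_exp, Real.exp_log hK]
    rw [hK_eq, ← Complex.exp_add]
    ring_nf
  have hu₀ : u ≠ 0 := by rintro rfl; simp at hu
  have hu₁ : u ≠ 1 := by rintro rfl; norm_num at hu
  have hu₁' : u - 1 ≠ 0 := sub_ne_zero.2 hu₁
  have hu₁'' : 1 - u ≠ 0 := sub_ne_zero.2 hu₁.symm
  rw [← mul_div_assoc, hK_exp]
  field_simp
  ring
end

section
/- Let μ be a probability measure on ℝ, R ∈ ℝ, and f : ℝ → ℝ a continuous function such that (i) x ↦ exp(−R·x)·f(x) is Lebesgue-integrable on ℝ, (ii) its Fourier-type transform 𝑓̂(y) := ∫_ℝ exp(−(R + iy)·x)·f(x) dx is Lebesgue-integrable in y over ℝ, and (iii) ∫ exp(R·x) dμ(x) < ∞. Then f is μ-integrable and ∫ f dμ = (1/2π) ∫_ℝ (∫ exp((R + iy)·x) dμ(x)) · 𝑓̂(y) dy. -/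
/-!
With `g x = exp (-R x) f x`, the transform `f̂ y` is the Fourier transform of `g` at `y / 2π`.
Fourier inversion for the continuous integrable `g` with integrable transform therefore gives
`f x = (2π)⁻¹ ∫ exp ((R + iy) x) f̂ y dy` at every `x`. This bounds `|f x|` by
`(2π)⁻¹ ‖f̂‖₁ exp (R x)`, which is `μ`-integrable; the same bound on the integrand in `(x, y)`
justifies Fubini, turning `∫ f dμ` into `(2π)⁻¹ ∫ E[exp ((R + iy) X)] f̂ y dy`.
-/

open MeasureTheory Complex ProbabilityTheory
open scoped FourierTransform

noncomputable def bilateralLaplace (f : ℝ → ℂ) (s : ℂ) : ℂ :=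
  ∫ x : ℝ, cexp (-s * x) * f x

lemma norm_cexp_add_mul_I_mul (R y x : ℝ) : ‖cexp ((R + y * I) * x)‖ = Real.exp (R * x) := by
  rw [norm_exp]
  congr 1
  simp

lemma fourier_exp_mul_eq_bilateralLaplace (f : ℝ → ℂ) (R ξ : ℝ) :
    𝓕 (fun x : ℝ => (Real.exp (-R * x) : ℂ) * f x) ξ
      = bilateralLaplace f (R + (2 * Real.pi * ξ : ℝ) * I) := by
  rw [Real.fourier_real_eq_integral_exp_smul, bilateralLaplace]
  congr 1 with x
  rw [smul_eq_mul, ← mul_assoc, ofReal_exp, ← Complex.exp_add]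
  push_cast
  ring_nf

theorem bilateralLaplace_inversion {f : ℝ → ℂ} {R : ℝ} {x : ℝ} (hf : ContinuousAt f x)
    (h_damped : Integrable (fun t : ℝ => (Real.exp (-R * t) : ℂ) * f t))
    (h_line : Integrable (fun y : ℝ => bilateralLaplace f (R + y * I))) :
    f x = (2 * Real.pi)⁻¹ * ∫ y : ℝ, cexp ((R + y * I) * x) * bilateralLaplace f (R + y * I) := by
  set g : ℝ → ℂ := fun t => (Real.exp (-R * t) : ℂ) * f t
  have hFg : 𝓕 g = fun ξ : ℝ => bilateralLaplace f (R + (2 * Real.pi * ξ : ℝ) * I) :=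
    funext (fourier_exp_mul_eq_bilateralLaplace f R)
  have hFg_int : Integrable (𝓕 g) := by
    rw [hFg]
    exact h_line.comp_mul_left' (by positivity)
  have hg : ContinuousAt g x := by fun_prop
  have hinv : g x = 𝓕⁻ (𝓕 g) x := (h_damped.fourierInv_fourier_eq hFg_int hg).symm
  rw [Real.fourierInv_eq', hFg] at hinv
  set h : ℝ → ℂ := fun y => cexp (y * x * I) * bilateralLaplace f (R + y * I)
  calc f x = cexp (R * x) * g x := by
        simp [g, ← mul_assoc, ← Complex.exp_add]
    _ = cexp (R * x) * ∫ ξ : ℝ, h (2 * Real.pi * ξ) := by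
        rw [hinv]
        congr 1
        refine integral_congr_ae (.of_forall fun ξ => ?_)
        simp only [h, smul_eq_mul, RCLike.inner_apply, conj_trivial]
        push_cast
        ring_nf
    _ = cexp (R * x) * ((2 * Real.pi)⁻¹ * ∫ y : ℝ, h y) := by
        rw [Measure.integral_comp_mul_left, abs_of_pos (by positivity), real_smul]
    _ = _ := by
        rw [mul_left_comm, ← integral_const_mul]
        congr 1
        refine integral_congr_ae (.of_forall fun y => ?_)
        simp only [h, ← mul_assoc, ← Complex.exp_add]
        ring_nf

lemma norm_integral_cexp_mul_le {φ : ℝ → ℂ} (hφ : Integrable φ) (R x : ℝ) :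
    ‖∫ y : ℝ, cexp ((R + y * I) * x) * φ y‖ ≤ Real.exp (R * x) * ∫ y : ℝ, ‖φ y‖ := by
  rw [← integral_const_mul]
  refine norm_integral_le_of_norm_le (hφ.norm.const_mul _) (.of_forall fun y => ?_)
  rw [norm_mul, norm_cexp_add_mul_I_mul]

theorem integrable_of_bilateralLaplace {μ : Measure ℝ} {f : ℝ → ℂ} {R : ℝ} (hf : Continuous f)
    (h_damped : Integrable (fun t : ℝ => (Real.exp (-R * t) : ℂ) * f t))
    (h_line : Integrable (fun y : ℝ => bilateralLaplace f (R + y * I)))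
    (hμ : Integrable (fun x : ℝ => Real.exp (R * x)) μ) :
    Integrable f μ := by
  refine (hμ.const_mul ((2 * Real.pi)⁻¹ * ∫ y : ℝ, ‖bilateralLaplace f (R + y * I)‖)).mono'
    hf.aestronglyMeasurable (.of_forall fun x => ?_)
  rw [bilateralLaplace_inversion hf.continuousAt h_damped h_line, norm_mul, norm_real,
    Real.norm_of_nonneg (by positivity), mul_assoc, mul_comm (∫ y : ℝ, _)]
  gcongr
  exact norm_integral_cexp_mul_le h_line R x

lemma integrable_cexp_mul_prod {μ : Measure ℝ} [SFinite μ] {R : ℝ} {φ : ℝ → ℂ}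
    (hμ : Integrable (fun x : ℝ => Real.exp (R * x)) μ) (hφ : Integrable φ) :
    Integrable (fun p : ℝ × ℝ => cexp ((R + p.2 * I) * p.1) * φ p.2) (μ.prod volume) := by
  refine (hμ.mul_prod hφ.norm).mono' ?_ (.of_forall fun p => ?_)
  · exact (Continuous.aestronglyMeasurable (by fun_prop)).mul hφ.aestronglyMeasurable.comp_snd
  · rw [norm_mul, norm_cexp_add_mul_I_mul]

theorem integral_eq_integral_complexMGF_mul_bilateralLaplace {μ : Measure ℝ} [SFinite μ]
    {f : ℝ → ℂ} {R : ℝ} (hf : Continuous f)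
    (h_damped : Integrable (fun t : ℝ => (Real.exp (-R * t) : ℂ) * f t))
    (h_line : Integrable (fun y : ℝ => bilateralLaplace f (R + y * I)))
    (hμ : Integrable (fun x : ℝ => Real.exp (R * x)) μ) :
    ∫ x, f x ∂μ = (2 * Real.pi)⁻¹ *
      ∫ y : ℝ, complexMGF id μ (R + y * I) * bilateralLaplace f (R + y * I) := by
  calc ∫ x, f x ∂μ
      = ∫ x : ℝ, (2 * Real.pi)⁻¹ *
          (∫ y : ℝ, cexp ((R + y * I) * x) * bilateralLaplace f (R + y * I)) ∂μ :=
        integral_congr_ae (.of_forall fun x =>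
          bilateralLaplace_inversion hf.continuousAt h_damped h_line)
    _ = (2 * Real.pi)⁻¹ *
          ∫ y : ℝ, ∫ x, cexp ((R + y * I) * x) * bilateralLaplace f (R + y * I) ∂μ := by
        rw [integral_const_mul, integral_integral_swap
          (f := fun (x y : ℝ) => cexp ((R + y * I) * x) * bilateralLaplace f (R + y * I))
          (integrable_cexp_mul_prod hμ h_line)]
    _ = _ := by
        simp only [integral_mul_const, complexMGF, id]

/-- Fourier pricing representation. Let `μ` be a probability
measure on `ℝ`, `R ∈ ℝ` and `f : ℝ → ℝ` continuous such that
(i) `x ↦ exp(−Rx) f(x)` is Lebesgue-integrable,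
(ii) its transform `f̂(y) = ∫ exp(−(R+iy)x) f(x) dx` is integrable in `y`, and
(iii) `∫ exp(Rx) dμ < ∞`.  Then `f` is `μ`-integrable and
`∫ f dμ = (1/2π) ∫ (∫ exp((R+iy)x) dμ(x)) f̂(y) dy`. -/
theorem stmt_18 (μ : Measure ℝ) [IsProbabilityMeasure μ] (R : ℝ)
    (f : ℝ → ℝ) (hf : Continuous f)
    (h1 : Integrable (fun x : ℝ => Real.exp (-R * x) * f x) volume)
    (fhat : ℝ → ℂ)
    (hfhat : ∀ y : ℝ,
      fhat y = ∫ x : ℝ, Complex.exp (-((R : ℂ) + (y : ℂ) * Complex.I) * (x : ℂ)) * (f x : ℂ))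
    (h2 : Integrable fhat volume)
    (h3 : Integrable (fun x : ℝ => Real.exp (R * x)) μ) :
    Integrable f μ ∧
    ((∫ x, f x ∂μ : ℝ) : ℂ)
      = (1 / (2 * Real.pi)) *
        ∫ y : ℝ, (∫ x, Complex.exp (((R : ℂ) + (y : ℂ) * Complex.I) * (x : ℂ)) ∂μ) * fhat y := by
  obtain rfl : fhat = fun y : ℝ => bilateralLaplace (fun x => f x) (R + y * I) := funext hfhat
  have hF : Continuous fun x : ℝ => (f x : ℂ) := continuous_ofReal.comp hf
  have h_damped : Integrable fun t : ℝ => (Real.exp (-R * t) : ℂ) * f t := by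
    simpa using h1.ofReal (𝕜 := ℂ)
  refine ⟨?_, ?_⟩
  · simpa only [RCLike.re_to_complex, ofReal_re] using
      (integrable_of_bilateralLaplace hF h_damped h2 h3).re
  · rw [← integral_complex_ofReal,
      integral_eq_integral_complexMGF_mul_bilateralLaplace hF h_damped h2 h3]
    push_cast
    simp only [one_div, complexMGF, id]
end
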